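/- Let e : R ≃+* (ZMod 2) × S be a ring isomorphism, where S = (ZMod 2)[X] ⧸ ⟨X²⟩. Let C₂ be a linear code of length n over ZMod 2 (a subspace of (ZMod 2)ⁿ) and C_w a linear code of length n over S (an S-submodule of Sⁿ), and let C = { x : Fin n → R | (i ↦ (e(xᵢ)).1) ∈ C₂ and (i ↦ (e(xᵢ)).2) ∈ C_w } be the code CRT⁻¹(C₂, C_w) ⊆ Rⁿ. Then C^⊥ ⊆ C if and only if C₂^⊥ ⊆ C₂ and C_w^⊥ ⊆ C_w, where in each case the dual is taken with respect to the inner product x·y = Σᵢ xᵢyᵢ over the respective ring. -/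
import Mathlib


open Polynomial

set_option synthInstance.maxHeartbeats 1000000
set_option maxHeartbeats 1000000

noncomputable section

/-- The ring `R = F₂ + uF₂ + u²F₂` with `u³ = u`, realized as `(ZMod 2)[X] ⧸ ⟨X³ - X⟩`. -/
abbrev R : Type := Polynomial (ZMod 2) ⧸ Ideal.span ({X ^ 3 - X} : Set (Polynomial (ZMod 2)))

/-- The chain ring `S = F₂ + wF₂` with `w² = 0`, realized as `(ZMod 2)[X] ⧸ ⟨X²⟩`. -/
abbrev S : Type := Polynomial (ZMod 2) ⧸ Ideal.span ({X ^ 2} : Set (Polynomial (ZMod 2)))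

/-- The dual of a code of length `n` over a commutative ring `A`, with respect to the
standard inner product `Σᵢ cᵢyᵢ`. -/
def dualCode {A : Type*} [CommRing A] (n : ℕ) (D : Set (Fin n → A)) : Set (Fin n → A) :=
  {y | ∀ c ∈ D, ∑ i, c i * y i = 0}

/-- The code `C = CRT⁻¹(C₂, C_w) ⊆ Rⁿ` determined by a ring isomorphism
`e : R ≃+* ZMod 2 × S` and codes `C₂ ⊆ (ZMod 2)ⁿ`, `C_w ⊆ Sⁿ`. -/
def crtCode (n : ℕ) (e : R ≃+* ZMod 2 × S)
    (C₂ : Submodule (ZMod 2) (Fin n → ZMod 2)) (Cw : Submodule S (Fin n → S)) :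
    Set (Fin n → R) :=
  {x | (fun i => (e (x i)).1) ∈ C₂ ∧ (fun i => (e (x i)).2) ∈ Cw}

/-- For `C = CRT⁻¹(C₂, C_w)`, one has `C^⊥ ⊆ C` if and only if `C₂^⊥ ⊆ C₂` and
`C_w^⊥ ⊆ C_w`. -/
theorem crt_dual_subset_iff (n : ℕ) (e : R ≃+* ZMod 2 × S)
    (C₂ : Submodule (ZMod 2) (Fin n → ZMod 2)) (Cw : Submodule S (Fin n → S)) :
    dualCode n (crtCode n e C₂ Cw) ⊆ crtCode n e C₂ Cw ↔
      dualCode n (C₂ : Set (Fin n → ZMod 2)) ⊆ (C₂ : Set (Fin n → ZMod 2)) ∧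
      dualCode n (Cw : Set (Fin n → S)) ⊆ (Cw : Set (Fin n → S)) := by
  have key : ∀ x y : Fin n → R,
      e (∑ i, x i * y i) =
        (∑ i, (e (x i)).1 * (e (y i)).1, ∑ i, (e (x i)).2 * (e (y i)).2) := by
    intro x y
    rw [map_sum]
    refine Prod.ext ?_ ?_ <;> simp [Prod.fst_sum, Prod.snd_sum]
  -- The dual of the CRT code is the CRT code of the duals.
  have dual_eq : ∀ y : Fin n → R,
      y ∈ dualCode n (crtCode n e C₂ Cw) ↔
        (fun i => (e (y i)).1) ∈ dualCode n (C₂ : Set (Fin n → ZMod 2)) ∧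
        (fun i => (e (y i)).2) ∈ dualCode n (Cw : Set (Fin n → S)) := by
    intro y
    constructor
    · intro hy
      constructor
      · intro a ha
        have hx : (fun i => e.symm (a i, 0)) ∈ crtCode n e C₂ Cw := by
          constructor
          · simpa using ha
          · simp only [RingEquiv.apply_symm_apply]
            exact Cw.zero_mem
        have h0 := hy _ hx
        have := key (fun i => e.symm (a i, 0)) y
        rw [h0, map_zero] at this
        have h1 := congrArg Prod.fst this.symm
        simpa using h1
      · intro b hb
        have hx : (fun i => e.symm (0, b i)) ∈ crtCode n e C₂ Cw := by
          constructor
          · simp only [RingEquiv.apply_symm_apply]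
            exact C₂.zero_mem
          · simpa using hb
        have h0 := hy _ hx
        have := key (fun i => e.symm (0, b i)) y
        rw [h0, map_zero] at this
        have h2 := congrArg Prod.snd this.symm
        simpa using h2
    · rintro ⟨h1, h2⟩ c hc
      apply e.injective
      rw [key, map_zero]
      exact Prod.ext (h1 _ hc.1) (h2 _ hc.2)
  constructor
  · intro h
    constructor
    · intro a ha
      have hx : (fun i => e.symm (a i, 0)) ∈ dualCode n (crtCode n e C₂ Cw) := by
        rw [dual_eq]
        constructor
        · simpa using ha
        · intro c _
          simp
      have := (h hx).1
      simpa using this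
    · intro b hb
      have hx : (fun i => e.symm (0, b i)) ∈ dualCode n (crtCode n e C₂ Cw) := by
        rw [dual_eq]
        constructor
        · intro c _
          simp
        · simpa using hb
      have := (h hx).2
      simpa using this
  · rintro ⟨h1, h2⟩ y hy
    rw [dual_eq] at hy
    exact ⟨h1 hy.1, h2 hy.2⟩
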